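/- (Saddle point characterization) In the elliptic optimal control setting, the pair (u, y(u)) is a saddle point of L(v, q) := E_v(y_d) - E_v(q) + ‖v - u_d‖_N² on K × V: L(u, q) ≤ L(u, y(u)) ≤ L(v, y(u)) for all v ∈ K and q ∈ V, where E_v(q) := a(q,q) - 2ℓ(q) - 2(Bv)(q) and u is the minimizer of J over K with state y(u). -/

import Mathlib

/-!
The state map `y` is affine, so along a segment `u + t • (v - u)` in `K` the cost `J` is a
quadratic polynomial in `t`; minimality of `u` forces its linear coefficient
`2 D`, `D = a (y u - y_d) (y v - y u) + ⟪N (u - u_d), v - u⟫`, to be nonnegative (the variational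
inequality). The first saddle inequality says that `y u` minimises the energy
`E_u`, whose excess over the minimum is `a (q - y u) (q - y u)`. The second holds because
`L v (y u) - L u (y u) = 2 D + ‖v - u‖_N²`, by the state equation.
-/

open RealInnerProductSpace Filter Topology

theorem nonneg_of_forall_mem_Ioc_mul_add_sq_nonneg {D C : ℝ}
    (h : ∀ t ∈ Set.Ioc (0 : ℝ) 1, 0 ≤ 2 * t * D + t ^ 2 * C) : 0 ≤ D := by
  have hlim : Tendsto (fun t : ℝ => 2 * D + t * C) (𝓝[>] 0) (𝓝 (2 * D)) := by
    have hcont : Continuous fun t : ℝ => 2 * D + t * C := by fun_prop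
    simpa using (hcont.tendsto 0).mono_left nhdsWithin_le_nhds
  have hev : ∀ᶠ t in 𝓝[>] (0 : ℝ), 0 ≤ 2 * D + t * C := by
    filter_upwards [Ioc_mem_nhdsGT one_pos] with t ht
    exact (mul_nonneg_iff_of_pos_left ht.1).mp (by linarith [h t ht])
  linarith [ge_of_tendsto hlim hev]

theorem IsMinOn.nonneg_of_eq_quadratic_on_segment {E : Type*} [AddCommGroup E] [Module ℝ E]
    {K : Set E} {J : E → ℝ} {u v : E} {D C : ℝ} (hmin : IsMinOn J K u) (hK : Convex ℝ K)
    (hu : u ∈ K) (hv : v ∈ K) (hJ : ∀ t : ℝ, J (u + t • (v - u)) = J u + 2 * t * D + t ^ 2 * C) :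
    0 ≤ D :=
  nonneg_of_forall_mem_Ioc_mul_add_sq_nonneg fun t ht => by
    have h := isMinOn_iff.mp hmin _ (hK.add_smul_sub_mem hu hv (Set.Ioc_subset_Icc_self ht))
    rw [hJ] at h
    linarith

theorem LinearMap.BilinForm.apply_add_smul_self_of_symm {M : Type*} [AddCommGroup M]
    [Module ℝ M] (b : LinearMap.BilinForm ℝ M) (hsym : ∀ x z : M, b x z = b z x) (x z : M)
    (t : ℝ) : b (x + t • z) (x + t • z) = b x x + 2 * t * b x z + t ^ 2 * b z z := by
  simp only [map_add, map_smul, LinearMap.add_apply, LinearMap.smul_apply, smul_eq_mul, hsym z x]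
  ring

theorem inner_map_add_smul_self_of_symm {U : Type*} [NormedAddCommGroup U]
    [InnerProductSpace ℝ U] {N : U →L[ℝ] U} (hN : ∀ w w' : U, ⟪N w, w'⟫ = ⟪w, N w'⟫)
    (p w : U) (t : ℝ) :
    ⟪N (p + t • w), p + t • w⟫ = ⟪N p, p⟫ + 2 * t * ⟪N p, w⟫ + t ^ 2 * ⟪N w, w⟫ :=
  LinearMap.BilinForm.apply_add_smul_self_of_symm (innerₗ U ∘ₗ N.toLinearMap)
    (fun x z => by simp [hN x z, real_inner_comm]) p w t

theorem LinearMap.BilinForm.separatingLeft_of_coercive {V : Type*} [NormedAddCommGroup V]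
    [NormedSpace ℝ V] {a : LinearMap.BilinForm ℝ V}
    (hcoer : ∃ c : ℝ, 0 < c ∧ ∀ q : V, c * ‖q‖ ^ 2 ≤ a q q) : a.SeparatingLeft := by
  obtain ⟨c, hc, hco⟩ := hcoer
  intro d hd
  by_contra hne
  have hpos : 0 < c * ‖d‖ ^ 2 := by positivity
  linarith [hco d, hd d]

section OptimalControl

variable {V U : Type*} [NormedAddCommGroup V] [NormedSpace ℝ V] [NormedAddCommGroup U]
  [InnerProductSpace ℝ U]

variable (a : LinearMap.BilinForm ℝ V) (ℓ : V →L[ℝ] ℝ) (B : U →L[ℝ] V →L[ℝ] ℝ) (N : U →L[ℝ] U)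
  (y : U → V) (y_d : V) (u_d : U)

noncomputable def energy (v : U) (q : V) : ℝ := a q q - 2 * ℓ q - 2 * B v q

noncomputable def lagrangian (v : U) (q : V) : ℝ :=
  energy a ℓ B v y_d - energy a ℓ B v q + ⟪N (v - u_d), v - u_d⟫

noncomputable def cost (v : U) : ℝ := a (y v - y_d) (y v - y_d) + ⟪N (v - u_d), v - u_d⟫

variable {a ℓ B N y}

theorem state_sub_apply (hy : ∀ (v : U) (q : V), a (y v) q = ℓ q + B v q) (v w : U) (q : V) :
    a (y v - y w) q = B (v - w) q := by
  rw [map_sub, LinearMap.sub_apply, hy, hy, map_sub, sub_apply]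
  ring

theorem state_add_smul_sub (hy : ∀ (v : U) (q : V), a (y v) q = ℓ q + B v q)
    (ha : a.SeparatingLeft) (u v : U) (t : ℝ) :
    y (u + t • (v - u)) = y u + t • (y v - y u) := by
  refine sub_eq_zero.mp (ha _ fun q => ?_)
  rw [show y (u + t • (v - u)) - (y u + t • (y v - y u))
      = (y (u + t • (v - u)) - y u) - t • (y v - y u) by abel,
    map_sub, map_smul, LinearMap.sub_apply, LinearMap.smul_apply, state_sub_apply hy,
    state_sub_apply hy, add_sub_cancel_left, map_smul, smul_apply, sub_self]

theorem energy_sub_energy_state (hsym : ∀ q z : V, a q z = a z q)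
    (hy : ∀ (v : U) (q : V), a (y v) q = ℓ q + B v q) (u : U) (q : V) :
    energy a ℓ B u q - energy a ℓ B u (y u) = a (q - y u) (q - y u) := by
  simp only [energy, map_sub, LinearMap.sub_apply]
  linarith [hy u q, hy u (y u), hsym q (y u)]

theorem cost_add_smul_sub (hsym : ∀ q z : V, a q z = a z q)
    (hN : ∀ w w' : U, ⟪N w, w'⟫ = ⟪w, N w'⟫) (hy : ∀ (v : U) (q : V), a (y v) q = ℓ q + B v q)
    (ha : a.SeparatingLeft) (u v : U) (t : ℝ) :
    cost a N y y_d u_d (u + t • (v - u)) = cost a N y y_d u_d u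
      + 2 * t * (a (y u - y_d) (y v - y u) + ⟪N (u - u_d), v - u⟫)
      + t ^ 2 * (a (y v - y u) (y v - y u) + ⟪N (v - u), v - u⟫) := by
  have hy_t : y (u + t • (v - u)) - y_d = (y u - y_d) + t • (y v - y u) := by
    rw [state_add_smul_sub hy ha]; abel
  have hu_t : u + t • (v - u) - u_d = (u - u_d) + t • (v - u) := by abel
  rw [cost, cost, hy_t, hu_t, a.apply_add_smul_self_of_symm hsym,
    inner_map_add_smul_self_of_symm hN]
  ring

theorem lagrangian_sub_lagrangian_state (hsym : ∀ q z : V, a q z = a z q)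
    (hN : ∀ w w' : U, ⟪N w, w'⟫ = ⟪w, N w'⟫) (hy : ∀ (v : U) (q : V), a (y v) q = ℓ q + B v q)
    (u v : U) :
    lagrangian a ℓ B N y_d u_d v (y u) - lagrangian a ℓ B N y_d u_d u (y u)
      = 2 * (a (y u - y_d) (y v - y u) + ⟪N (u - u_d), v - u⟫) + ⟪N (v - u), v - u⟫ := by
  have hB : B (v - u) (y u - y_d) = a (y u - y_d) (y v - y u) := by
    rw [← state_sub_apply hy, hsym]
  have hu_d : v - u_d = (u - u_d) + (1 : ℝ) • (v - u) := by rw [one_smul]; abel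
  rw [lagrangian, lagrangian, hu_d, inner_map_add_smul_self_of_symm hN, ← hB]
  simp only [energy, map_sub, sub_apply]
  ring

end OptimalControl

theorem saddle_point_characterization_general
    {V U : Type*} [NormedAddCommGroup V] [InnerProductSpace ℝ V]
    [NormedAddCommGroup U] [InnerProductSpace ℝ U]
    (K : Set U) (hKconv : Convex ℝ K)
    (a : V →ₗ[ℝ] V →ₗ[ℝ] ℝ)
    (hsym : ∀ q z : V, a q z = a z q)
    (hcoer : ∃ c : ℝ, 0 < c ∧ ∀ q : V, c * ‖q‖ ^ 2 ≤ a q q)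
    (B : U →L[ℝ] (V →L[ℝ] ℝ)) (ℓ : V →L[ℝ] ℝ)
    (y : U → V) (hy : ∀ (v : U) (q : V), a (y v) q = ℓ q + B v q)
    (N : U →L[ℝ] U)
    (hNsym : ∀ w w' : U, ⟪N w, w'⟫ = ⟪w, N w'⟫)
    (hNpos : ∃ κ : ℝ, 0 < κ ∧ ∀ w : U, κ * ‖w‖ ^ 2 ≤ ⟪N w, w⟫)
    (y_d : V) (u_d : U)
    (E : U → V → ℝ)
    (hE : ∀ (v : U) (q : V), E v q = a q q - 2 * ℓ q - 2 * B v q)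
    (L : U → V → ℝ)
    (hL : ∀ (v : U) (q : V), L v q = E v y_d - E v q + ⟪N (v - u_d), v - u_d⟫)
    (J : U → ℝ)
    (hJ : ∀ v : U, J v = a (y v - y_d) (y v - y_d) + ⟪N (v - u_d), v - u_d⟫)
    (u : U) (hu : u ∈ K) (hmin : ∀ v ∈ K, J u ≤ J v) :
    (∀ q : V, L u q ≤ L u (y u)) ∧ ∀ v ∈ K, L u (y u) ≤ L v (y u) := by
  obtain rfl : E = energy a ℓ B := funext₂ hE
  obtain rfl : L = lagrangian a ℓ B N y_d u_d := funext₂ hL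
  obtain rfl : J = cost a N y y_d u_d := funext hJ
  have ha_nonneg : ∀ q : V, 0 ≤ a q q := by
    obtain ⟨c, hc, hco⟩ := hcoer
    exact fun q => (by positivity : 0 ≤ c * ‖q‖ ^ 2).trans (hco q)
  have hN_nonneg : ∀ w : U, 0 ≤ ⟪N w, w⟫ := by
    obtain ⟨κ, hκ, hNκ⟩ := hNpos
    exact fun w => (by positivity : 0 ≤ κ * ‖w‖ ^ 2).trans (hNκ w)
  refine ⟨fun q => ?_, fun v hv => ?_⟩
  · have h := energy_sub_energy_state hsym hy u q
    simp only [lagrangian]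
    linarith [ha_nonneg (q - y u)]
  · have hVI := (isMinOn_iff.mpr hmin).nonneg_of_eq_quadratic_on_segment hKconv hu hv
      (cost_add_smul_sub y_d u_d hsym hNsym hy
        (LinearMap.BilinForm.separatingLeft_of_coercive hcoer) u v)
    linarith [lagrangian_sub_lagrangian_state y_d u_d hsym hNsym hy u v, hN_nonneg (v - u)]

theorem saddle_point_characterization
    {V U : Type*} [NormedAddCommGroup V] [InnerProductSpace ℝ V] [CompleteSpace V]
    [NormedAddCommGroup U] [InnerProductSpace ℝ U] [CompleteSpace U]
    (K : Set U) (hK : K.Nonempty) (hKc : IsClosed K) (hKconv : Convex ℝ K)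
    (a : V →ₗ[ℝ] V →ₗ[ℝ] ℝ)
    (hsym : ∀ q z : V, a q z = a z q)
    (hbdd : ∃ C : ℝ, ∀ q z : V, |a q z| ≤ C * ‖q‖ * ‖z‖)
    (hcoer : ∃ c : ℝ, 0 < c ∧ ∀ q : V, c * ‖q‖ ^ 2 ≤ a q q)
    (B : U →L[ℝ] (V →L[ℝ] ℝ)) (ℓ : V →L[ℝ] ℝ)
    (y : U → V) (hy : ∀ (v : U) (q : V), a (y v) q = ℓ q + B v q)
    (N : U →L[ℝ] U)
    (hNsym : ∀ w w' : U, ⟪N w, w'⟫ = ⟪w, N w'⟫)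
    (hNpos : ∃ κ : ℝ, 0 < κ ∧ ∀ w : U, κ * ‖w‖ ^ 2 ≤ ⟪N w, w⟫)
    (y_d : V) (u_d : U)
    (E : U → V → ℝ)
    (hE : ∀ (v : U) (q : V), E v q = a q q - 2 * ℓ q - 2 * B v q)
    (L : U → V → ℝ)
    (hL : ∀ (v : U) (q : V), L v q = E v y_d - E v q + ⟪N (v - u_d), v - u_d⟫)
    (J : U → ℝ)
    (hJ : ∀ v : U, J v = a (y v - y_d) (y v - y_d) + ⟪N (v - u_d), v - u_d⟫)
    (u : U) (hu : u ∈ K) (hmin : ∀ v ∈ K, J u ≤ J v) :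
    (∀ q : V, L u q ≤ L u (y u)) ∧ ∀ v ∈ K, L u (y u) ≤ L v (y u) :=
  saddle_point_characterization_general K hKconv a hsym hcoer B ℓ y hy N hNsym hNpos y_d u_d E hE L
    hL J hJ u hu hmin
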